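/- Let $B, C$ be symmetric positive definite matrices. Then the operator norm of their matrix geometric mean satisfies $\|B \# C\| \leq \|B\|^{1/2}\|C\|^{1/2}$. -/

import Mathlib

open Matrix MeasureTheory

/-- The symmetric positive semidefinite square root of a matrix (zero if the
matrix is not positive semidefinite). -/
noncomputable def msqrt {d : ℕ} (A : Matrix (Fin d) (Fin d) ℝ) : Matrix (Fin d) (Fin d) ℝ :=
  open scoped Classical in
  if h : A.PosSemidef then (h.1.eigenvectorUnitary.1 * diagonal ((↑) ∘ (√·) ∘ h.1.eigenvalues) *
      (star h.1.eigenvectorUnitary : Matrix (Fin d) (Fin d) ℝ)) else 0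

/-- The operator (spectral) norm of a matrix, as the norm of the induced map on
Euclidean space. -/
noncomputable def opNorm {d : ℕ} (A : Matrix (Fin d) (Fin d) ℝ) : ℝ :=
  ‖LinearMap.toContinuousLinearMap (Matrix.toEuclideanLin A)‖

/-- The smallest eigenvalue of a symmetric matrix (zero if not symmetric). -/
noncomputable def lamMin {d : ℕ} (A : Matrix (Fin d) (Fin d) ℝ) : ℝ :=
  open scoped Classical in
  if h : A.IsHermitian then ⨅ i, h.eigenvalues i else 0

/-- Interpret a plain vector as a point of Euclidean space. -/
noncomputable def toE {d : ℕ} (v : Fin d → ℝ) : EuclideanSpace ℝ (Fin d) :=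
  (WithLp.equiv 2 (Fin d → ℝ)).symm v

/-- The matrix geometric mean `B # C = B^{1/2} (B^{-1/2} C B^{-1/2})^{1/2} B^{1/2}`. -/
noncomputable def gmean {d : ℕ} (B C : Matrix (Fin d) (Fin d) ℝ) : Matrix (Fin d) (Fin d) ℝ :=
  msqrt B * msqrt ((msqrt B)⁻¹ * C * (msqrt B)⁻¹) * msqrt B

lemma msqrt_posSemidef {d : ℕ} {A : Matrix (Fin d) (Fin d) ℝ} (h : A.PosSemidef) :
    (msqrt A).PosSemidef := by
  classical
  rw [msqrt, dif_pos h]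
  have hD : (diagonal ((↑) ∘ (√·) ∘ h.1.eigenvalues) : Matrix (Fin d) (Fin d) ℝ).PosSemidef := by
    rw [posSemidef_diagonal_iff]
    intro i
    exact Real.sqrt_nonneg _
  have := hD.mul_mul_conjTranspose_same (h.1.eigenvectorUnitary : Matrix (Fin d) (Fin d) ℝ)
  convert this using 2
  · congr 1

lemma msqrt_mul_self {d : ℕ} {A : Matrix (Fin d) (Fin d) ℝ} (h : A.PosSemidef) :
    msqrt A * msqrt A = A := by
  classical
  rw [msqrt, dif_pos h]
  set U : Matrix (Fin d) (Fin d) ℝ := h.1.eigenvectorUnitary.1 with hU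
  have hUU : (star h.1.eigenvectorUnitary : Matrix (Fin d) (Fin d) ℝ) * U = 1 :=
    Unitary.coe_star_mul_self _
  have hDD : (diagonal ((↑) ∘ (√·) ∘ h.1.eigenvalues) : Matrix (Fin d) (Fin d) ℝ) *
      diagonal ((↑) ∘ (√·) ∘ h.1.eigenvalues) = diagonal (RCLike.ofReal ∘ h.1.eigenvalues) := by
    rw [diagonal_mul_diagonal]
    congr 1
    funext i
    simp [Real.mul_self_sqrt (h.eigenvalues_nonneg i)]
  have key : U * diagonal ((↑) ∘ (√·) ∘ h.1.eigenvalues) *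
      (star h.1.eigenvectorUnitary : Matrix (Fin d) (Fin d) ℝ) *
      (U * diagonal ((↑) ∘ (√·) ∘ h.1.eigenvalues) *
      (star h.1.eigenvectorUnitary : Matrix (Fin d) (Fin d) ℝ)) =
      U * ((diagonal ((↑) ∘ (√·) ∘ h.1.eigenvalues) : Matrix (Fin d) (Fin d) ℝ) *
      diagonal ((↑) ∘ (√·) ∘ h.1.eigenvalues)) *
      (star h.1.eigenvectorUnitary : Matrix (Fin d) (Fin d) ℝ) := by
    calc _ = U * diagonal ((↑) ∘ (√·) ∘ h.1.eigenvalues) *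
        ((star h.1.eigenvectorUnitary : Matrix (Fin d) (Fin d) ℝ) * U) *
        diagonal ((↑) ∘ (√·) ∘ h.1.eigenvalues) *
        (star h.1.eigenvectorUnitary : Matrix (Fin d) (Fin d) ℝ) := by
          simp only [Matrix.mul_assoc]
      _ = _ := by rw [hUU, Matrix.mul_one]; simp only [Matrix.mul_assoc]
  rw [key, hDD]
  conv_rhs => rw [h.1.spectral_theorem]
  rw [Unitary.conjStarAlgAut_apply]

open scoped Matrix.Norms.L2Operator in
lemma opNorm_eq_l2 {d : ℕ} (A : Matrix (Fin d) (Fin d) ℝ) : opNorm A = ‖A‖ := rfl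

theorem gmean_opNorm_le {d : ℕ}
    (B C : Matrix (Fin d) (Fin d) ℝ) (hB : B.PosDef) (hC : C.PosDef) :
    opNorm (gmean B C) ≤ Real.sqrt (opNorm B) * Real.sqrt (opNorm C) := by
  open scoped Matrix.Norms.L2Operator in
  classical
  set S : Matrix (Fin d) (Fin d) ℝ := msqrt B with hS
  have hSpsd : S.PosSemidef := msqrt_posSemidef hB.posSemidef
  have hSherm : Sᴴ = S := hSpsd.1
  have hSS : S * S = B := msqrt_mul_self hB.posSemidef
  -- S is invertible
  have hdetS : IsUnit S.det := by
    have : S.det * S.det = B.det := by rw [← det_mul, hSS]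
    have hBdet : 0 < B.det := hB.det_pos
    refine isUnit_iff_ne_zero.mpr fun h => ?_
    rw [h, mul_zero] at this
    exact (ne_of_gt hBdet) this.symm
  have hSinv : S * S⁻¹ = 1 := mul_nonsing_inv S hdetS
  have hSinv' : S⁻¹ * S = 1 := nonsing_inv_mul S hdetS
  have hSinvherm : (S⁻¹)ᴴ = S⁻¹ := by
    rw [conjTranspose_nonsing_inv, hSherm]
  -- the middle matrix
  set X : Matrix (Fin d) (Fin d) ℝ := S⁻¹ * C * S⁻¹ with hX
  have hXpsd : X.PosSemidef := by
    have := hC.posSemidef.conjTranspose_mul_mul_same S⁻¹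
    rwa [hSinvherm] at this
  set M : Matrix (Fin d) (Fin d) ℝ := msqrt X with hM
  have hMpsd : M.PosSemidef := msqrt_posSemidef hXpsd
  have hMherm : Mᴴ = M := hMpsd.1
  have hMM : M * M = X := msqrt_mul_self hXpsd
  -- key norm computations
  have hnormS : ‖S‖ = Real.sqrt ‖B‖ := by
    have h1 : ‖Sᴴ * S‖ = ‖S‖ * ‖S‖ := l2_opNorm_conjTranspose_mul_self S
    rw [hSherm, hSS] at h1
    rw [h1, Real.sqrt_mul_self (norm_nonneg S)]
  have hMS : (M * S)ᴴ * (M * S) = C := by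
    rw [conjTranspose_mul, hMherm, hSherm]
    calc S * M * (M * S) = S * (M * M) * S := by noncomm_ring
    _ = S * (S⁻¹ * C * S⁻¹) * S := by rw [hMM]
    _ = (S * S⁻¹) * C * (S⁻¹ * S) := by noncomm_ring
    _ = C := by rw [hSinv, hSinv']; simp
  have hnormMS : ‖M * S‖ = Real.sqrt ‖C‖ := by
    have h1 : ‖(M * S)ᴴ * (M * S)‖ = ‖M * S‖ * ‖M * S‖ :=
      l2_opNorm_conjTranspose_mul_self (M * S)
    rw [hMS] at h1
    rw [h1, Real.sqrt_mul_self (norm_nonneg _)]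
  have hSM : ‖S * M‖ = Real.sqrt ‖C‖ := by
    have : (M * S)ᴴ = S * M := by rw [conjTranspose_mul, hMherm, hSherm]
    rw [← this, l2_opNorm_conjTranspose, hnormMS]
  have hgm : gmean B C = (S * M) * S := by
    rw [gmean, ← hS, ← hX, ← hM]
  calc opNorm (gmean B C) = ‖(S * M) * S‖ := by rw [opNorm_eq_l2, hgm]
    _ ≤ ‖S * M‖ * ‖S‖ := l2_opNorm_mul _ _
    _ = Real.sqrt ‖C‖ * Real.sqrt ‖B‖ := by rw [hSM, hnormS]
    _ = Real.sqrt (opNorm B) * Real.sqrt (opNorm C) := by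
        rw [opNorm_eq_l2, opNorm_eq_l2, mul_comm]
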